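/- arXiv:1806.00997 — 2 statements merged into one kernel-verified Lean document; each statement's English description precedes it below -/
import Mathlib

section
/- Let T ∈ ℝ, let a, b, σ be positive real constants, let γ ≥ 0 and ψ ≥ 0, and set k(x) := √(a² + 2(1+b·x)·σ²). Then the function t ↦ Φ(t,T;ψ,γ) on (−∞,T] is strictly decreasing if ψ < (k(γ)−a)/σ², identically equal to ψ if ψ = (k(γ)−a)/σ², and strictly increasing if ψ > (k(γ)−a)/σ². -/
/-- k(x) := √(a² + 2(1+b·x)·σ²). -/
noncomputable def kfun (a b σ x : ℝ) : ℝ := Real.sqrt (a ^ 2 + 2 * (1 + b * x) * σ ^ 2)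

/-- The explicit solution Φ(t,T;ψ,γ) of the Riccati equation with constant coefficient γ. -/
noncomputable def Phi (a b σ ψ γ T t : ℝ) : ℝ :=
  ((kfun a b σ γ - a) / σ ^ 2 * (ψ + (a + kfun a b σ γ) / σ ^ 2) +
      (a + kfun a b σ γ) / σ ^ 2 * (ψ + (a - kfun a b σ γ) / σ ^ 2) *
        Real.exp (-(kfun a b σ γ) * (T - t))) /
    ((ψ + (a + kfun a b σ γ) / σ ^ 2) +
      ((kfun a b σ γ - a) / σ ^ 2 - ψ) * Real.exp (-(kfun a b σ γ) * (T - t)))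

/-! Write α = (k - a)/σ² and -β = -(a + k)/σ² for the two roots of the Riccati right-hand
side, and s = k (T - t) ≥ 0. Multiplying numerator and denominator of Φ by eˢ gives
Φ = α + (ψ - α)(α + β) / ((ψ + β) eˢ - (ψ - α)), whose denominator is positive and
strictly decreasing in t. Hence the sign of ψ - α decides whether Φ decreases, stays at α,
or increases. -/

open Real Set

lemma abs_lt_kfun {a b σ x : ℝ} (hσ : σ ≠ 0) (hx : 0 < 1 + b * x) : |a| < kfun a b σ x := by
  rw [kfun, ← sqrt_sq_eq_abs]
  exact sqrt_lt_sqrt (sq_nonneg a) (lt_add_of_pos_right _ (by positivity))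

section Mobius

variable {α β ψ : ℝ}

lemma mobius_exp_neg_eq_add_div {s : ℝ} (hD : (ψ + β) * exp s - (ψ - α) ≠ 0) :
    (α * (ψ + β) + β * (ψ - α) * exp (-s)) / ((ψ + β) - (ψ - α) * exp (-s)) =
      α + (ψ - α) * (α + β) / ((ψ + β) * exp s - (ψ - α)) := by
  have hden : (ψ + β) - (ψ - α) * exp (-s) = ((ψ + β) * exp s - (ψ - α)) * exp (-s) := by
    rw [exp_neg]; field_simp
  rw [hden, div_eq_iff (mul_ne_zero hD (exp_pos _).ne'), exp_neg]
  field_simp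
  ring

lemma mul_exp_sub_pos (hα : 0 < α) (hβ : 0 < β) (hψ : 0 ≤ ψ) {s : ℝ} (hs : 0 ≤ s) :
    0 < (ψ + β) * exp s - (ψ - α) := by
  nlinarith [add_one_le_exp s]

end Mobius

section Composition

variable {f : ℝ → ℝ} {s : Set ℝ} {c : ℝ}

lemma StrictAntiOn.const_add_div_of_pos (hf : StrictAntiOn f s) (hpos : ∀ x ∈ s, 0 < f x)
    (α : ℝ) (hc : 0 < c) : StrictMonoOn (fun x => α + c / f x) s :=
  fun _ hx _ hy hxy => add_lt_add_right (div_lt_div_of_pos_left hc (hpos _ hy) (hf hx hy hxy)) α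

lemma StrictAntiOn.const_add_div_of_neg (hf : StrictAntiOn f s) (hpos : ∀ x ∈ s, 0 < f x)
    (α : ℝ) (hc : c < 0) : StrictAntiOn (fun x => α + c / f x) s := fun _ hx _ hy hxy => by
  have := (inv_lt_inv₀ (hpos _ hx) (hpos _ hy)).2 (hf hx hy hxy)
  simpa only [div_eq_mul_inv] using add_lt_add_right (mul_lt_mul_of_neg_left this hc) α

end Composition

theorem Phi_monotonicity_general
    (T a b σ γ ψ : ℝ) (hb : 0 < b) (hσ : 0 < σ)
    (hγ : 0 ≤ γ) (hψ : 0 ≤ ψ) :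
    (ψ < (kfun a b σ γ - a) / σ ^ 2 →
      StrictAntiOn (fun t => Phi a b σ ψ γ T t) (Set.Iic T)) ∧
    (ψ = (kfun a b σ γ - a) / σ ^ 2 →
      ∀ t ≤ T, Phi a b σ ψ γ T t = ψ) ∧
    ((kfun a b σ γ - a) / σ ^ 2 < ψ →
      StrictMonoOn (fun t => Phi a b σ ψ γ T t) (Set.Iic T)) := by
  set k := kfun a b σ γ
  have hk : |a| < k := abs_lt_kfun hσ.ne' (by positivity)
  set α := (k - a) / σ ^ 2
  set β := (a + k) / σ ^ 2
  have hα : 0 < α := div_pos (by linarith [le_abs_self a]) (by positivity)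
  have hβ : 0 < β := div_pos (by linarith [neg_abs_le a]) (by positivity)
  have hk₀ : 0 < k := (abs_nonneg a).trans_lt hk
  have hψβ : 0 < ψ + β := by positivity
  set D := fun t => (ψ + β) * exp (k * (T - t)) - (ψ - α)
  have hD_pos : ∀ t ∈ Iic T, 0 < D t := fun t ht =>
    mul_exp_sub_pos hα hβ hψ (mul_nonneg hk₀.le (sub_nonneg.2 ht))
  have hD_anti : StrictAntiOn D (Iic T) := fun s _ t _ hst => by
    dsimp only [D]
    gcongr
  have hPhi :
      EqOn (fun t => α + (ψ - α) * (α + β) / D t) (fun t => Phi a b σ ψ γ T t) (Iic T) :=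
    fun t ht => by
      dsimp only
      rw [← mobius_exp_neg_eq_add_div (hD_pos t ht).ne', Phi, ← neg_mul]
      congr 1 <;> ring
  have hαβ : 0 < α + β := add_pos hα hβ
  refine ⟨fun h => ?_, fun h t ht => ?_, fun h => ?_⟩
  · exact (hD_anti.const_add_div_of_neg hD_pos α
      (mul_neg_of_neg_of_pos (sub_neg.2 h) hαβ)).congr hPhi
  · simpa [h] using (hPhi ht).symm
  · exact (hD_anti.const_add_div_of_pos hD_pos α (mul_pos (sub_pos.2 h) hαβ)).congr hPhi

/-- on (−∞,T], t ↦ Φ(t,T;ψ,γ) is strictly decreasing if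
ψ < (k(γ)−a)/σ², identically ψ if ψ = (k(γ)−a)/σ², and strictly increasing
if ψ > (k(γ)−a)/σ². -/
theorem Phi_monotonicity
    (T a b σ γ ψ : ℝ) (ha : 0 < a) (hb : 0 < b) (hσ : 0 < σ)
    (hγ : 0 ≤ γ) (hψ : 0 ≤ ψ) :
    (ψ < (kfun a b σ γ - a) / σ ^ 2 →
      StrictAntiOn (fun t => Phi a b σ ψ γ T t) (Set.Iic T)) ∧
    (ψ = (kfun a b σ γ - a) / σ ^ 2 →
      ∀ t ≤ T, Phi a b σ ψ γ T t = ψ) ∧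
    ((kfun a b σ γ - a) / σ ^ 2 < ψ →
      StrictMonoOn (fun t => Phi a b σ ψ γ T t) (Set.Iic T)) :=
  Phi_monotonicity_general T a b σ γ ψ hb hσ hγ hψ
end

section
/- Let a, σ > 0, b ≥ 0, τ > 0, T ∈ ℝ, and let w ∈ [0, (k(0)−a)/σ²) where k(x) := √(a² + 2(1+b·x)·σ²). Let (φⱼ)ⱼ≥₀ denote the solution of the recursive delayed Riccati system with final datum w, writing φⱼ(t,T;w) to display the dependence on w. Then for every j ≥ 0 and every t ∈ [T−(j+1)τ, T−jτ], the function w ↦ φⱼ(t,T;w) has a right derivative at every point w of [0, (k(0)−a)/σ²). -/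
/-- The domain [T−(j+1)τ, T−jτ] of the j-th component of the recursive delayed
Riccati system. -/
def riccatiDom (T τ : ℝ) (j : ℕ) : Set ℝ :=
  Set.Icc (T - ((j : ℝ) + 1) * τ) (T - (j : ℝ) * τ)

/-- The recursive delayed Riccati system with delay τ, horizon T and final datum w. -/
def DelayedRiccatiSol (a b σ τ T w : ℝ) (φ : ℕ → ℝ → ℝ) : Prop :=
  φ 0 T = w ∧
  (∀ t ∈ riccatiDom T τ 0, HasDerivWithinAt (φ 0)
    (σ ^ 2 / 2 * (φ 0 t) ^ 2 + a * φ 0 t - 1) (riccatiDom T τ 0) t) ∧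
  (∀ j : ℕ, φ (j + 1) (T - ((j : ℝ) + 1) * τ) = φ j (T - ((j : ℝ) + 1) * τ)) ∧
  (∀ j : ℕ, ∀ t ∈ riccatiDom T τ (j + 1), HasDerivWithinAt (φ (j + 1))
    (σ ^ 2 / 2 * (φ (j + 1) t) ^ 2 + a * φ (j + 1) t - 1 - b * φ j (t + τ))
    (riccatiDom T τ (j + 1)) t)

/-!
For fixed `t`, the map `w ↦ φ w j t` is concave and its difference quotients to the right of each
`w` are bounded above. The difference quotients of a concave function decrease with the increment,
so they converge as the increment decreases to `0`, and the limit is the right derivative.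

Both properties, and monotonicity in `w`, are proved by induction on `j` from comparison principles for the backward
equation `y' = F y - g t` with the convex right-hand side `F x = σ²x²/2 + a x - 1`
(`riccatiField`): solutions are ordered like their final data and forcings, a convex combination
of solutions lies below the solution with the combined final datum because `F` is convex, and the
gap between two ordered solutions is controlled by a backward Gronwall barrier. Since `b ≥ 0`, the
forcing `b * φ j (t + τ)` of `φ (j + 1)` passes each property on from one component to the next.
-/

open Set Real

noncomputable def riccatiField (a σ x : ℝ) : ℝ := σ ^ 2 / 2 * x ^ 2 + a * x - 1

theorem nonpos_of_hasDerivWithinAt_of_pos_imp_nonneg {u u' : ℝ → ℝ} {α β : ℝ}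
    (hu : ∀ t ∈ Icc α β, HasDerivWithinAt u (u' t) (Icc α β) t) (hβ : u β ≤ 0)
    (hu' : ∀ t ∈ Icc α β, 0 < u t → 0 ≤ u' t) :
    ∀ t ∈ Icc α β, u t ≤ 0 := by
  intro t₁ ht₁
  by_contra! hpos
  have hcont : ContinuousOn u (Icc α β) := fun t ht => (hu t ht).continuousWithinAt
  -- `sInf S` is the first point after `t₁` where `u ≤ 0`; before it `u > 0`, so `u` is monotone.
  set S := Icc t₁ β ∩ u ⁻¹' Iic 0
  have hS : IsClosed S :=
    (hcont.mono (Icc_subset_Icc_left ht₁.1)).preimage_isClosed_of_isClosed isClosed_Icc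
      isClosed_Iic
  have hSbdd : BddBelow S := ⟨t₁, fun t ht => ht.1.1⟩
  have ht₀ : sInf S ∈ S := hS.csInf_mem ⟨β, ⟨ht₁.2, le_rfl⟩, hβ⟩ hSbdd
  have hsub : Icc t₁ (sInf S) ⊆ Icc α β := Icc_subset_Icc ht₁.1 ht₀.1.2
  have hpos_before : ∀ t ∈ Ioo t₁ (sInf S), 0 < u t := fun t ht => by
    by_contra! hle
    exact (csInf_le hSbdd ⟨⟨ht.1.le, ht.2.le.trans ht₀.1.2⟩, hle⟩).not_gt ht.2
  have hmono : MonotoneOn u (Icc t₁ (sInf S)) := by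
    refine monotoneOn_of_hasDerivWithinAt_nonneg (convex_Icc _ _) (hcont.mono hsub)
      (f' := u') (fun t ht => ?_) (fun t ht => ?_) <;> simp only [interior_Icc] at ht ⊢
    · exact (hu t (hsub (Ioo_subset_Icc_self ht))).mono (Ioo_subset_Icc_self.trans hsub)
    · exact hu' t (hsub (Ioo_subset_Icc_self ht)) (hpos_before t ht)
  have := hmono ⟨le_rfl, ht₀.1.1⟩ ⟨ht₀.1.1, le_rfl⟩ ht₀.1.1
  exact (hpos.trans_le this).not_ge ht₀.2

theorem nonpos_of_neg_mul_le_deriv {u u' : ℝ → ℝ} {α β : ℝ} (K : ℝ)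
    (hu : ∀ t ∈ Icc α β, HasDerivWithinAt u (u' t) (Icc α β) t) (hβ : u β ≤ 0)
    (hu' : ∀ t ∈ Icc α β, 0 < u t → -K * u t ≤ u' t) :
    ∀ t ∈ Icc α β, u t ≤ 0 := by
  have hv : ∀ t ∈ Icc α β, HasDerivWithinAt (fun s => exp (K * s) * u s)
      (exp (K * t) * (u' t + K * u t)) (Icc α β) t := fun t ht => by
    have := ((hasDerivAt_id' t).const_mul K).exp.hasDerivWithinAt.fun_mul (hu t ht)
    exact this.congr_deriv (by ring)
  intro t ht
  have := nonpos_of_hasDerivWithinAt_of_pos_imp_nonneg hv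
    (mul_nonpos_of_nonneg_of_nonpos (exp_pos _).le hβ)
    (fun s hs hpos => ?_) t ht
  · exact nonpos_of_mul_nonpos_right this (exp_pos _)
  · have := hu' s hs (pos_of_mul_pos_right hpos (exp_pos _).le)
    exact mul_nonneg (exp_pos _).le (by linarith)

theorem le_of_neg_mul_sub_le_deriv {u u' : ℝ → ℝ} {α β K A B : ℝ} (hK : 0 ≤ K) (hB : 0 ≤ B)
    (hu : ∀ t ∈ Icc α β, HasDerivWithinAt u (u' t) (Icc α β) t) (hβ : u β ≤ A)
    (hu' : ∀ t ∈ Icc α β, -K * u t - B ≤ u' t) :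
    ∀ t ∈ Icc α β, u t ≤ (A + B * (β - t)) * exp (K * (β - t)) := by
  set ρ := fun t => (A + B * (β - t)) * exp (K * (β - t))
  have hρ : ∀ t, HasDerivAt ρ (-B * exp (K * (β - t)) - K * ρ t) t := fun t => by
    have hlin : HasDerivAt (fun s => β - s) (-1) t := (hasDerivAt_id' t).const_sub β
    have := ((hlin.const_mul B).const_add A).fun_mul (hlin.const_mul K).exp
    exact this.congr_deriv (by ring)
  intro t ht
  have := nonpos_of_neg_mul_le_deriv K (u := fun s => u s - ρ s)
    (fun s hs => (hu s hs).sub (hρ s).hasDerivWithinAt) (by simpa [ρ] using hβ)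
    (fun s hs _ => ?_) t ht
  · linarith
  · have := hu' s hs
    have : 1 ≤ exp (K * (β - s)) := one_le_exp (mul_nonneg hK (sub_nonneg.2 hs.2))
    nlinarith

theorem ContinuousOn.exists_neg_le_sq_mul_add {a σ α β : ℝ} {y : ℝ → ℝ}
    (hy : ContinuousOn y (Icc α β)) : ∃ K, 0 ≤ K ∧ ∀ t ∈ Icc α β, -K ≤ σ ^ 2 * y t + a := by
  obtain ⟨m, hm⟩ := isCompact_Icc.bddBelow_image ((continuousOn_const.mul hy).add continuousOn_const)
  refine ⟨max (-m) 0, le_max_right _ _, fun t ht => ?_⟩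
  have : m ≤ σ ^ 2 * y t + a := hm ⟨t, ht, rfl⟩
  linarith [le_max_left (-m) 0]

theorem convexOn_riccatiField (a σ : ℝ) : ConvexOn ℝ univ (riccatiField a σ) := by
  refine ⟨convex_univ, fun x _ y _ p q hp hq hpq => ?_⟩
  obtain rfl : q = 1 - p := by linarith
  simp only [smul_eq_mul, riccatiField]
  nlinarith [mul_nonneg (mul_nonneg (sq_nonneg σ) (mul_nonneg hp hq)) (sq_nonneg (x - y))]

theorem linearization_le_riccatiField_sub (a σ y z : ℝ) :
    (σ ^ 2 * y + a) * (z - y) ≤ riccatiField a σ z - riccatiField a σ y := by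
  simp only [riccatiField]
  nlinarith [mul_nonneg (sq_nonneg σ) (sq_nonneg (z - y))]

section Comparison

variable {a σ α β : ℝ} {y z y' z' : ℝ → ℝ}

theorem riccati_comparison
    (hy : ∀ t ∈ Icc α β, HasDerivWithinAt y (y' t) (Icc α β) t)
    (hz : ∀ t ∈ Icc α β, HasDerivWithinAt z (z' t) (Icc α β) t) (hβ : z β ≤ y β)
    (hder : ∀ t ∈ Icc α β, y' t - riccatiField a σ (y t) ≤ z' t - riccatiField a σ (z t)) :
    ∀ t ∈ Icc α β, z t ≤ y t := by
  obtain ⟨K, -, hK⟩ := ContinuousOn.exists_neg_le_sq_mul_add (a := a) (σ := σ)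
    fun t ht => (hy t ht).continuousWithinAt
  intro t ht
  refine sub_nonpos.1 <| nonpos_of_neg_mul_le_deriv K (fun s hs => (hz s hs).fun_sub (hy s hs))
    (sub_nonpos.2 hβ) (fun s hs hpos => ?_) t ht
  have := linearization_le_riccatiField_sub a σ (y s) (z s)
  nlinarith [mul_le_mul_of_nonneg_right (hK s hs) hpos.le, hder s hs]

theorem riccati_sub_le {K A B : ℝ} (hK : 0 ≤ K) (hB : 0 ≤ B)
    (hy : ∀ t ∈ Icc α β, HasDerivWithinAt y (y' t) (Icc α β) t)
    (hz : ∀ t ∈ Icc α β, HasDerivWithinAt z (z' t) (Icc α β) t)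
    (hyz : ∀ t ∈ Icc α β, y t ≤ z t) (hyK : ∀ t ∈ Icc α β, -K ≤ σ ^ 2 * y t + a)
    (hβ : z β - y β ≤ A)
    (hder : ∀ t ∈ Icc α β, y' t - riccatiField a σ (y t) - B ≤ z' t - riccatiField a σ (z t)) :
    ∀ t ∈ Icc α β, z t - y t ≤ (A + B * (β - t)) * exp (K * (β - t)) :=
  le_of_neg_mul_sub_le_deriv hK hB (fun s hs => (hz s hs).fun_sub (hy s hs)) hβ fun s hs => by
    have := linearization_le_riccatiField_sub a σ (y s) (z s)
    nlinarith [mul_le_mul_of_nonneg_right (hyK s hs) (sub_nonneg.2 (hyz s hs)), hder s hs]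

end Comparison

section DelayedRiccati

variable {a b σ τ T : ℝ}

theorem riccatiDom_left_mem (hτ : 0 ≤ τ) (j : ℕ) : T - ((j : ℝ) + 1) * τ ∈ riccatiDom T τ j :=
  ⟨le_rfl, by linarith⟩

theorem add_mem_riccatiDom {j : ℕ} {t : ℝ} (ht : t ∈ riccatiDom T τ (j + 1)) :
    t + τ ∈ riccatiDom T τ j := by
  obtain ⟨h₁, h₂⟩ := ht
  push_cast at h₁ h₂
  constructor <;> linarith

theorem sub_mem_Icc_of_mem_riccatiDom {j : ℕ} {t : ℝ} (ht : t ∈ riccatiDom T τ j) :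
    T - j * τ - t ∈ Icc 0 τ := by
  obtain ⟨h₁, h₂⟩ := ht
  constructor <;> linarith

namespace DelayedRiccatiSol

variable {w w₁ w₂ : ℝ} {φ φ₁ φ₂ : ℕ → ℝ → ℝ}

theorem succ_final_eq (h : DelayedRiccatiSol a b σ τ T w φ) (j : ℕ) :
    φ (j + 1) (T - ((j + 1 : ℕ) : ℝ) * τ) = φ j (T - ((j : ℝ) + 1) * τ) := by
  push_cast
  exact h.2.2.1 j

theorem le_of_final_le (hb : 0 ≤ b) (hτ : 0 ≤ τ) (h₁ : DelayedRiccatiSol a b σ τ T w₁ φ₁)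
    (h₂ : DelayedRiccatiSol a b σ τ T w₂ φ₂) (hw : w₁ ≤ w₂) :
    ∀ j, ∀ t ∈ riccatiDom T τ j, φ₁ j t ≤ φ₂ j t
  | 0 => riccati_comparison (a := a) (σ := σ) h₂.2.1 h₁.2.1 (by simpa [h₁.1, h₂.1] using hw)
      fun t _ => by simp [riccatiField]
  | j + 1 => by
    have ih := le_of_final_le hb hτ h₁ h₂ hw j
    refine riccati_comparison (a := a) (σ := σ) (h₂.2.2.2 j) (h₁.2.2.2 j) ?_ fun t ht => ?_
    · rw [h₁.succ_final_eq, h₂.succ_final_eq]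
      exact ih _ (riccatiDom_left_mem hτ j)
    · have := mul_le_mul_of_nonneg_left (ih _ (add_mem_riccatiDom ht)) hb
      simp only [riccatiField]
      linarith

theorem convex_combination_le {p q : ℝ} (hb : 0 ≤ b) (hτ : 0 ≤ τ)
    (h₁ : DelayedRiccatiSol a b σ τ T w₁ φ₁) (h₂ : DelayedRiccatiSol a b σ τ T w₂ φ₂)
    (h : DelayedRiccatiSol a b σ τ T (p * w₁ + q * w₂) φ) (hp : 0 ≤ p) (hq : 0 ≤ q)
    (hpq : p + q = 1) :
    ∀ j, ∀ t ∈ riccatiDom T τ j, p * φ₁ j t + q * φ₂ j t ≤ φ j t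
  | 0 => riccati_comparison (a := a) (σ := σ) h.2.1
      (fun t ht => ((h₁.2.1 t ht).const_mul p).fun_add ((h₂.2.1 t ht).const_mul q))
      (by simp [h.1, h₁.1, h₂.1]) fun t _ => by
        have := (convexOn_riccatiField a σ).2 (mem_univ (φ₁ 0 t)) (mem_univ (φ₂ 0 t)) hp hq hpq
        simp only [smul_eq_mul, riccatiField] at this ⊢
        linarith
  | j + 1 => by
    have ih := convex_combination_le hb hτ h₁ h₂ h hp hq hpq j
    refine riccati_comparison (a := a) (σ := σ) (h.2.2.2 j)
      (fun t ht => ((h₁.2.2.2 j t ht).const_mul p).fun_add ((h₂.2.2.2 j t ht).const_mul q))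
      ?_ fun t ht => ?_
    · rw [h.succ_final_eq, h₁.succ_final_eq, h₂.succ_final_eq]
      exact ih _ (riccatiDom_left_mem hτ j)
    · have := (convexOn_riccatiField a σ).2 (mem_univ (φ₁ (j + 1) t)) (mem_univ (φ₂ (j + 1) t))
        hp hq hpq
      have := mul_le_mul_of_nonneg_left (ih _ (add_mem_riccatiDom ht)) hb
      simp only [smul_eq_mul, riccatiField] at *
      linarith

theorem exists_sub_le_mul_sub {v : ℝ} {ψ : ℕ → ℝ → ℝ} (hb : 0 ≤ b) (hτ : 0 ≤ τ)
    (hψ : DelayedRiccatiSol a b σ τ T v ψ) :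
    ∀ j, ∃ M, 0 ≤ M ∧ ∀ w φ, v ≤ w → DelayedRiccatiSol a b σ τ T w φ →
      ∀ t ∈ riccatiDom T τ j, φ j t - ψ j t ≤ M * (w - v)
  | 0 => by
    obtain ⟨K, hK, hψK⟩ := ContinuousOn.exists_neg_le_sq_mul_add (a := a) (σ := σ)
      fun t ht => (hψ.2.1 t ht).continuousWithinAt
    refine ⟨exp (K * τ), (exp_pos _).le, fun w φ hvw hφ t ht => ?_⟩
    have := riccati_sub_le hK le_rfl hψ.2.1 hφ.2.1 (hψ.le_of_final_le hb hτ hφ hvw 0) hψK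
      (A := w - v) (by simp [hψ.1, hφ.1]) (fun s _ => by simp [riccatiField]) t ht
    obtain ⟨hs₀, hsτ⟩ := sub_mem_Icc_of_mem_riccatiDom ht
    calc φ 0 t - ψ 0 t
        ≤ (w - v + 0 * (T - (0 : ℕ) * τ - t)) * exp (K * (T - (0 : ℕ) * τ - t)) := this
      _ ≤ (w - v + 0 * τ) * exp (K * τ) := by gcongr
      _ = exp (K * τ) * (w - v) := by ring
  | j + 1 => by
    obtain ⟨M, hM, hψM⟩ := exists_sub_le_mul_sub hb hτ hψ j
    obtain ⟨K, hK, hψK⟩ := ContinuousOn.exists_neg_le_sq_mul_add (a := a) (σ := σ)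
      fun t ht => (hψ.2.2.2 j t ht).continuousWithinAt
    refine ⟨(M + b * M * τ) * exp (K * τ), by positivity, fun w φ hvw hφ t ht => ?_⟩
    have hvw' : 0 ≤ w - v := sub_nonneg.2 hvw
    have := riccati_sub_le hK (by positivity : 0 ≤ b * (M * (w - v))) (hψ.2.2.2 j) (hφ.2.2.2 j)
      (hψ.le_of_final_le hb hτ hφ hvw (j + 1)) hψK (A := M * (w - v))
      (by rw [hψ.succ_final_eq, hφ.succ_final_eq]; exact hψM w φ hvw hφ _ (riccatiDom_left_mem hτ j))
      (fun s hs => by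
        have := mul_le_mul_of_nonneg_left (hψM w φ hvw hφ _ (add_mem_riccatiDom hs)) hb
        simp only [riccatiField]
        linarith) t ht
    obtain ⟨hs₀, hsτ⟩ := sub_mem_Icc_of_mem_riccatiDom ht
    calc φ (j + 1) t - ψ (j + 1) t
        ≤ (M * (w - v) + b * (M * (w - v)) * (T - ((j + 1 : ℕ) : ℝ) * τ - t))
          * exp (K * (T - ((j + 1 : ℕ) : ℝ) * τ - t)) := this
      _ ≤ (M * (w - v) + b * (M * (w - v)) * τ) * exp (K * τ) := by gcongr
      _ = (M + b * M * τ) * exp (K * τ) * (w - v) := by ring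

end DelayedRiccatiSol

theorem concaveOn_of_delayedRiccatiSol {a b σ τ T : ℝ} {I : Set ℝ} {φ : ℝ → ℕ → ℝ → ℝ}
    (hb : 0 ≤ b) (hτ : 0 ≤ τ) (hI : Convex ℝ I)
    (hφ : ∀ w ∈ I, DelayedRiccatiSol a b σ τ T w (φ w)) (j : ℕ) {t : ℝ}
    (ht : t ∈ riccatiDom T τ j) : ConcaveOn ℝ I fun w => φ w j t :=
  ⟨hI, fun _ hx _ hy _ _ hp hq hpq => (hφ _ hx).convex_combination_le hb hτ (hφ _ hy)
    (hφ _ (hI hx hy hp hq hpq)) hp hq hpq j t ht⟩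

end DelayedRiccati

theorem ConcaveOn.hasDerivWithinAt_Ici_sSup_slope {S : Set ℝ} {f : ℝ → ℝ} {x y : ℝ}
    (hf : ConcaveOn ℝ S f) (hx : x ∈ S) (hxy : x < y) (hS : Ioo x y ⊆ S)
    (hbdd : BddAbove (slope f x '' Ioo x y)) :
    HasDerivWithinAt f (sSup (slope f x '' Ioo x y)) (Ici x) x := by
  rw [← hasDerivWithinAt_Ioi_iff_Ici, hasDerivWithinAt_iff_tendsto_slope,
    sdiff_singleton_eq_self (s := Ioi x) (lt_irrefl x)]
  exact ((hf.antitoneOn_slope_gt hx).mono fun z hz => ⟨hS hz, hz.1⟩).tendsto_nhdsWithin_Ioo_right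
    (nonempty_Ioo.2 hxy) hbdd

theorem delayed_riccati_right_differentiable_in_w_general
    (a b σ τ T : ℝ) (hb : 0 ≤ b) (hτ : 0 < τ)
    (φ : ℝ → ℕ → ℝ → ℝ)
    (hφ : ∀ w ∈ Set.Ico (0 : ℝ) ((kfun a b σ 0 - a) / σ ^ 2),
      DelayedRiccatiSol a b σ τ T w (φ w)) :
    ∀ j : ℕ, ∀ t ∈ riccatiDom T τ j,
      ∀ w ∈ Set.Ico (0 : ℝ) ((kfun a b σ 0 - a) / σ ^ 2),
        ∃ d : ℝ, HasDerivWithinAt (fun w' => φ w' j t) d (Set.Ici w) w := by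
  intro j t ht w hw
  obtain ⟨M, -, hM⟩ := (hφ w hw).exists_sub_le_mul_sub hb hτ.le j
  have hright : Ioo w ((kfun a b σ 0 - a) / σ ^ 2) ⊆ Ico 0 ((kfun a b σ 0 - a) / σ ^ 2) :=
    fun x hx => ⟨hw.1.trans hx.1.le, hx.2⟩
  refine ⟨_, (concaveOn_of_delayedRiccatiSol hb hτ.le (convex_Ico _ _) hφ j ht)
    |>.hasDerivWithinAt_Ici_sSup_slope hw hw.2 hright ⟨M, ?_⟩⟩
  rintro _ ⟨x, hx, rfl⟩
  rw [slope_def_field, div_le_iff₀ (sub_pos.2 hx.1)]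
  exact hM x (φ x) hx.1.le (hφ x (hright hx)) t ht

/-- right-differentiability in the final datum w of the solution
φⱼ(t,T;w) of the recursive delayed Riccati system: for every j, every t in the
j-th domain, and every w ∈ [0, (k(0)−a)/σ²), the map w ↦ φⱼ(t,T;w) has a right
derivative at w. -/
theorem delayed_riccati_right_differentiable_in_w
    (a b σ τ T : ℝ) (ha : 0 < a) (hσ : 0 < σ) (hb : 0 ≤ b) (hτ : 0 < τ)
    (φ : ℝ → ℕ → ℝ → ℝ)
    (hφ : ∀ w ∈ Set.Ico (0 : ℝ) ((kfun a b σ 0 - a) / σ ^ 2),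
      DelayedRiccatiSol a b σ τ T w (φ w)) :
    ∀ j : ℕ, ∀ t ∈ riccatiDom T τ j,
      ∀ w ∈ Set.Ico (0 : ℝ) ((kfun a b σ 0 - a) / σ ^ 2),
        ∃ d : ℝ, HasDerivWithinAt (fun w' => φ w' j t) d (Set.Ici w) w :=
  delayed_riccati_right_differentiable_in_w_general a b σ τ T hb hτ φ hφ
end
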